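/- Let G be a finitely generated group such that Φ_F(G) has finite index in G. If H is a subgroup of G which is dense for the profinite topology on G, then H contains a finitely generated subgroup which is also dense in G for the profinite topology. -/

import Mathlib

/-- Vertices of the rooted regular tree over alphabet `A`: finite words in `A`. -/
abbrev Vert (A : Type*) := List A

/-- The automorphism group of the rooted regular tree with vertex set `Vert A`:
length-preserving permutations of the vertices that preserve the prefix order. -/
def treeAut (A : Type*) : Subgroup (Equiv.Perm (Vert A)) where
  carrier := { g | (∀ v : Vert A, (g v).length = v.length) ∧
    ∀ v w : Vert A, v <+: w ↔ g v <+: g w }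
  one_mem' := ⟨fun _ => rfl, fun _ _ => Iff.rfl⟩
  mul_mem' := by
    rintro g h ⟨hg1, hg2⟩ ⟨hh1, hh2⟩
    refine ⟨fun v => ?_, fun v w => ?_⟩
    · simp only [Equiv.Perm.mul_apply, hg1, hh1]
    · simpa only [Equiv.Perm.mul_apply] using (hh2 v w).trans (hg2 (h v) (h w))
  inv_mem' := by
    rintro g ⟨hg1, hg2⟩
    refine ⟨fun v => ?_, fun v w => ?_⟩
    · have h1 := hg1 (g⁻¹ v)
      rw [Equiv.Perm.inv_def, Equiv.apply_symm_apply] at h1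
      exact h1.symm
    · have h2 := hg2 (g⁻¹ v) (g⁻¹ w)
      rw [Equiv.Perm.inv_def, Equiv.apply_symm_apply, Equiv.apply_symm_apply] at h2
      exact h2.symm

open scoped Classical in
/-- The section `φ_v(g)` of an automorphism `g` at the vertex `v`: the unique
permutation `s` with `g (v ++ w) = g v ++ s w` for all `w` (it exists and is unique
whenever `g` is a tree automorphism). -/
noncomputable def sect {A : Type*} (g : Equiv.Perm (Vert A)) (v : Vert A) :
    Equiv.Perm (Vert A) :=
  if h : ∃ s : Equiv.Perm (Vert A), ∀ w : Vert A, g (v ++ w) = g v ++ s w then h.choose else 1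

/-- The `n`-th level of the tree: words of length `n`. -/
def level (A : Type*) (n : ℕ) : Set (Vert A) := { v | v.length = n }

/-- The pointwise stabilizer in `G` of a set `S` of vertices. -/
def stabSet {A : Type*} (G : Subgroup (Equiv.Perm (Vert A))) (S : Set (Vert A)) :
    Subgroup (Equiv.Perm (Vert A)) where
  carrier := { g | g ∈ G ∧ ∀ v ∈ S, g v = v }
  one_mem' := ⟨G.one_mem, fun _ _ => rfl⟩
  mul_mem' := by
    rintro g h ⟨hg, hg2⟩ ⟨hh, hh2⟩
    exact ⟨G.mul_mem hg hh, fun v hv => by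
      simp only [Equiv.Perm.mul_apply, hh2 v hv, hg2 v hv]⟩
  inv_mem' := by
    rintro g ⟨hg, hg2⟩
    refine ⟨G.inv_mem hg, fun v hv => ?_⟩
    conv_lhs => rw [← hg2 v hv]
    exact g.symm_apply_apply v

/-- The stabilizer in `G` of a single vertex `v`. -/
def vstab {A : Type*} (G : Subgroup (Equiv.Perm (Vert A))) (v : Vert A) :
    Subgroup (Equiv.Perm (Vert A)) := stabSet G {v}

/-- The pointwise stabilizer in `G` of the `n`-th level. -/
def lstab {A : Type*} (G : Subgroup (Equiv.Perm (Vert A))) (n : ℕ) :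
    Subgroup (Equiv.Perm (Vert A)) := stabSet G (level A n)

/-- The rigid stabilizer of a vertex `v` in `G`: elements of `G` acting trivially
outside the subtree rooted at `v`. -/
def rist {A : Type*} (G : Subgroup (Equiv.Perm (Vert A))) (v : Vert A) :
    Subgroup (Equiv.Perm (Vert A)) where
  carrier := { g | g ∈ G ∧ ∀ w : Vert A, ¬ v <+: w → g w = w }
  one_mem' := ⟨G.one_mem, fun _ _ => rfl⟩
  mul_mem' := by
    rintro g h ⟨hg, hg2⟩ ⟨hh, hh2⟩
    exact ⟨G.mul_mem hg hh, fun w hw => by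
      simp only [Equiv.Perm.mul_apply, hh2 w hw, hg2 w hw]⟩
  inv_mem' := by
    rintro g ⟨hg, hg2⟩
    refine ⟨G.inv_mem hg, fun w hw => ?_⟩
    conv_lhs => rw [← hg2 w hw]
    exact g.symm_apply_apply w

/-- The rigid stabilizer of the `n`-th level: the subgroup generated by the rigid
stabilizers of the vertices of level `n`. -/
def ristLevel {A : Type*} (G : Subgroup (Equiv.Perm (Vert A))) (n : ℕ) :
    Subgroup (Equiv.Perm (Vert A)) := ⨆ v ∈ level A n, rist G v

/-- The subgroup `φ_v(H)` generated by (equivalently, consisting of, when `H`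
stabilizes `v`) the sections at `v` of the elements of `H`. -/
def sectGrp {A : Type*} (H : Subgroup (Equiv.Perm (Vert A))) (v : Vert A) :
    Subgroup (Equiv.Perm (Vert A)) :=
  Subgroup.closure ((fun g => sect g v) '' (H : Set (Equiv.Perm (Vert A))))

/-- A transversal of the tree: a finite set of vertices met exactly once by every
infinite ray from the root. -/
def IsTransversal (A : Type*) (X : Set (Vert A)) : Prop :=
  X.Finite ∧ ∀ ω : ℕ → A, ∃! n : ℕ, (List.ofFn fun i : Fin n => ω i.val) ∈ X

/-- The subgroup induction property. -/
def HasSGIP {A : Type*} (G : Subgroup (Equiv.Perm (Vert A))) : Prop :=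
  ∀ H : Subgroup (Equiv.Perm (Vert A)), H ≤ G → H.FG →
    ∃ X : Set (Vert A), IsTransversal A X ∧ ∀ v ∈ X,
      sectGrp (stabSet H X) v = ⊥ ∨
      (sectGrp (stabSet H X) v).relIndex (sectGrp (vstab G v) v) ≠ 0

/-- `G` acts transitively on every level of the tree. -/
def LevelTransitive {A : Type*} (G : Subgroup (Equiv.Perm (Vert A))) : Prop :=
  ∀ v w : Vert A, v.length = w.length → ∃ g ∈ G, g v = w

/-- Weakly branch: level-transitive with all rigid vertex stabilizers infinite. -/
def IsWeaklyBranch {A : Type*} (G : Subgroup (Equiv.Perm (Vert A))) : Prop :=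
  LevelTransitive G ∧ ∀ v : Vert A, (rist G v : Set (Equiv.Perm (Vert A))).Infinite

/-- Branch: weakly branch and every level rigid stabilizer has finite index in `G`. -/
def IsBranch {A : Type*} (G : Subgroup (Equiv.Perm (Vert A))) : Prop :=
  IsWeaklyBranch G ∧ ∀ n : ℕ, (ristLevel G n).relIndex G ≠ 0

/-- Self-similar: all sections of vertex stabilizers land in `G`. -/
def SelfSimilar {A : Type*} (G : Subgroup (Equiv.Perm (Vert A))) : Prop :=
  ∀ v : Vert A, sectGrp (vstab G v) v ≤ G

/-- Self-replicating: `φ_v(Stab_G(v)) = G` for every vertex `v`. -/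
def SelfReplicating {A : Type*} (G : Subgroup (Equiv.Perm (Vert A))) : Prop :=
  ∀ v : Vert A, sectGrp (vstab G v) v = G

/-- Strongly self-replicating: self-similar and `φ_v(Stab_G(L_n)) = G` for every `n`
and every vertex `v` of level `n`. -/
def StronglySelfReplicating {A : Type*} (G : Subgroup (Equiv.Perm (Vert A))) : Prop :=
  SelfSimilar G ∧ ∀ (n : ℕ) (v : Vert A), v.length = n → sectGrp (lstab G n) v = G

/-- The congruence subgroup property: every finite-index subgroup of `G` contains
some level stabilizer. -/
def HasCSP {A : Type*} (G : Subgroup (Equiv.Perm (Vert A))) : Prop :=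
  ∀ K : Subgroup (Equiv.Perm (Vert A)), K ≤ G → K.relIndex G ≠ 0 →
    ∃ n : ℕ, lstab G n ≤ K

/-- A group is just infinite if it is infinite and all its proper quotients are
finite, i.e. every nontrivial normal subgroup has finite index. -/
def JustInfinite (G : Type*) [Group G] : Prop :=
  Infinite G ∧ ∀ N : Subgroup G, N.Normal → N ≠ ⊥ → N.index ≠ 0

/-- `Φ_F(G)`: the intersection of all maximal subgroups of finite index of `G`. -/
def PhiF (G : Type*) [Group G] : Subgroup G :=
  ⨅ M ∈ { M : Subgroup G | IsCoatom M ∧ M.index ≠ 0 }, M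

/-- Two groups are commensurable if they have isomorphic finite-index subgroups. -/
def CommGroups (G₁ : Type*) (G₂ : Type*) [Group G₁] [Group G₂] : Prop :=
  ∃ (H₁ : Subgroup G₁) (H₂ : Subgroup G₂),
    H₁.index ≠ 0 ∧ H₂.index ≠ 0 ∧ Nonempty (H₁ ≃* H₂)

/-!
Every maximal subgroup of finite index contains `Φ_F(G)`, so there are only finitely many of
them. A dense `H` lies in none of them, so picking one element of `H` outside each yields a
finite subset of `H`. The subgroup `K` it generates lies in no maximal subgroup of finite index
either; since every proper subgroup of finite index lies in one, `KN = G` for every normal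
subgroup `N` of finite index.
-/

namespace Subgroup

variable {G : Type*} [Group G]

def IsProfinitelyDense (H : Subgroup G) : Prop :=
  ∀ N : Subgroup G, N.Normal → N.index ≠ 0 → ∀ g : G, ∃ h ∈ H, ∃ n ∈ N, g = h * n

theorem exists_le_isCoatom_of_finiteIndex {P : Subgroup G} [P.FiniteIndex] (hP : P ≠ ⊤) :
    ∃ M : Subgroup G, P ≤ M ∧ IsCoatom M ∧ M.FiniteIndex := by
  -- a proper subgroup above `P` of least index is maximal, as the index is strictly antitone
  obtain ⟨M, ⟨hPM, hM⟩, hmin⟩ := (measure fun B : Subgroup G => B.index).wf.has_min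
    {B | P ≤ B ∧ B ≠ ⊤} ⟨P, le_rfl, hP⟩
  have : M.FiniteIndex := finiteIndex_of_le hPM
  refine ⟨M, hPM, ⟨hM, fun B hMB => ?_⟩, this⟩
  by_contra hB
  exact hmin B ⟨hPM.trans hMB.le, hB⟩ (index_strictAnti hMB)

theorem finite_setOf_le_of_finiteIndex (P : Subgroup G) [P.FiniteIndex] :
    {M : Subgroup G | P ≤ M}.Finite := by
  have : Finite (Subgroup (G ⧸ P.normalCore)) :=
    Finite.of_injective (fun M => (M : Set (G ⧸ P.normalCore))) SetLike.coe_injective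
  have hcore : {M : Subgroup G | P.normalCore ≤ M}.Finite :=
    Set.finite_coe_iff.mp (Finite.of_equiv _ (QuotientGroup.comapMk'OrderIso _).toEquiv)
  exact hcore.subset fun M hM => (normalCore_le P).trans hM

theorem IsProfinitelyDense.exists_mem_notMem {H : Subgroup G} (hH : H.IsProfinitelyDense)
    {M : Subgroup G} [M.FiniteIndex] (hM : M ≠ ⊤) : ∃ h ∈ H, h ∉ M := by
  obtain ⟨g, hg⟩ : ∃ g, g ∉ M := by
    by_contra! h
    exact hM (eq_top_iff' M |>.mpr h)
  obtain ⟨h, hh, n, hn, rfl⟩ :=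
    hH M.normalCore (normalCore_normal M) FiniteIndex.index_ne_zero g
  exact ⟨h, hh, fun hhM => hg (M.mul_mem hhM (normalCore_le M hn))⟩

open scoped Pointwise in
theorem isProfinitelyDense_of_forall_not_le {K : Subgroup G}
    (hK : ∀ M : Subgroup G, IsCoatom M → M.FiniteIndex → ¬K ≤ M) : K.IsProfinitelyDense := by
  intro N hN hNind g
  have : N.FiniteIndex := ⟨hNind⟩
  have : (K ⊔ N).FiniteIndex := finiteIndex_of_le le_sup_right
  have htop : K ⊔ N = ⊤ := by
    by_contra hne
    obtain ⟨M, hle, hM, hMfin⟩ := exists_le_isCoatom_of_finiteIndex hne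
    exact hK M hM hMfin (le_sup_left.trans hle)
  have hg : g ∈ (K : Set G) * N := by
    rw [← mul_normal, htop]
    trivial
  obtain ⟨k, hk, n, hn, rfl⟩ := hg
  exact ⟨k, hk, n, hn, rfl⟩

end Subgroup

theorem phiF_le {G : Type*} [Group G] {M : Subgroup G} (hM : IsCoatom M) (hMfin : M.index ≠ 0) :
    PhiF G ≤ M :=
  iInf₂_le M ⟨hM, hMfin⟩

open Subgroup in
theorem statement6_general (G : Type*) [Group G]
    (hphi : (PhiF G).index ≠ 0) (H : Subgroup G)
    (hdense : ∀ N : Subgroup G, N.Normal → N.index ≠ 0 →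
      ∀ g : G, ∃ h ∈ H, ∃ n ∈ N, g = h * n) :
    ∃ K : Subgroup G, K ≤ H ∧ K.FG ∧
      ∀ N : Subgroup G, N.Normal → N.index ≠ 0 →
        ∀ g : G, ∃ k ∈ K, ∃ n ∈ N, g = k * n := by
  have : (PhiF G).FiniteIndex := ⟨hphi⟩
  set S := {M : Subgroup G | IsCoatom M ∧ M.index ≠ 0}
  have hS : S.Finite :=
    (finite_setOf_le_of_finiteIndex (PhiF G)).subset fun M hM => phiF_le hM.1 hM.2
  have hpick : ∀ M ∈ S, ∃ h ∈ H, h ∉ M := fun M hM =>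
    have : M.FiniteIndex := ⟨hM.2⟩
    IsProfinitelyDense.exists_mem_notMem hdense hM.1.1
  choose! f hfH hfM using hpick
  refine ⟨closure (f '' S), ?_, (fg_iff _).mpr ⟨_, rfl, hS.image f⟩, ?_⟩
  · rw [closure_le]
    rintro _ ⟨M, hM, rfl⟩
    exact hfH M hM
  · refine isProfinitelyDense_of_forall_not_le fun M hM hMfin hle => ?_
    have hMS : M ∈ S := ⟨hM, hMfin.index_ne_zero⟩
    exact hfM M hMS (hle (subset_closure ⟨M, hMS, rfl⟩))

/-- Lemma 3.6: in a finitely generated group `G` with `Φ_F(G)` of finite index,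
every subgroup dense for the profinite topology contains a finitely generated
subgroup which is still dense. -/
theorem statement6 (G : Type*) [Group G] (hfg : Group.FG G)
    (hphi : (PhiF G).index ≠ 0) (H : Subgroup G)
    (hdense : ∀ N : Subgroup G, N.Normal → N.index ≠ 0 →
      ∀ g : G, ∃ h ∈ H, ∃ n ∈ N, g = h * n) :
    ∃ K : Subgroup G, K ≤ H ∧ K.FG ∧
      ∀ N : Subgroup G, N.Normal → N.index ≠ 0 →
        ∀ g : G, ∃ k ∈ K, ∃ n ∈ N, g = k * n :=
  statement6_general G hphi H hdense
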